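/- arXiv:2010.04988 — 9 statements merged into one kernel-verified Lean document; each statement's English description precedes it below -/
import Mathlib

section
/- Let p be a prime number, Z_p the ring of p-adic integers, and Λ = Z_p[[S,T]] the formal power series ring in two variables S, T over Z_p. Let M be a finitely generated Λ-module such that the quotient module M/SM is generated by n elements as a Z_p-module. Then there exist power series g_0(S), g_1(S), …, g_{n−1}(S) in the subring Z_p[[S]] of Λ such that the element f(S,T) = T^n + g_{n−1}(S)·T^{n−1} + … + g_1(S)·T + g_0(S) of Λ annihilates M, i.e. f(S,T)·m = 0 for all m in M. -/
/-!
Put `A = ℤ_p[[S]]`, so that `Λ = A[[T]]`. Lifts `mᵢ` of the generators of `M/SM` satisfy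
`M = ∑ ℤ_p mᵢ + S M`. Iterating this decomposition, the `ℤ_p`-coefficients produced at the `k`-th
step are the `S^k`-coefficients of power series `gᵢ(x) ∈ A`, and `x - ∑ gᵢ(x) mᵢ` lies in
`⋂ₖ S^k M`, which vanishes by Krull's intersection theorem. Hence the `mᵢ` generate `M` over `A`,
and the Cayley–Hamilton theorem for multiplication by `T` on this `A`-module gives a monic
annihilator of degree `n` in `A[T]`.
-/

open PowerSeries

/-- `Λ = ℤ_p[[S,T]]`, realized as the iterated power series ring `(ℤ_p[[S]])[[T]]`. -/
noncomputable abbrev Lambda (p : ℕ) [Fact p.Prime] : Type := PowerSeries (PowerSeries ℤ_[p])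

/-- The variable `S` of `Λ`: the inner power-series variable, embedded via `C`. -/
noncomputable abbrev Svar (p : ℕ) [Fact p.Prime] : Lambda p :=
  PowerSeries.C (R := PowerSeries ℤ_[p]) PowerSeries.X

/-- The variable `T` of `Λ`: the outer power-series variable. -/
noncomputable abbrev Tvar (p : ℕ) [Fact p.Prime] : Lambda p := PowerSeries.X

theorem Module.End.exists_pow_add_sum_smul_pow_eq_zero {R M : Type*} [CommRing R]
    [AddCommGroup M] [Module R M] {n : ℕ} {b : Fin n → M}
    (hb : Submodule.span R (Set.range b) = ⊤) (f : Module.End R M) :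
    ∃ c : Fin n → R, f ^ n + ∑ i : Fin n, c i • f ^ (i : ℕ) = 0 := by
  cases subsingleton_or_nontrivial R
  · have := Module.subsingleton R M
    exact ⟨0, Subsingleton.elim _ _⟩
  obtain ⟨A, rfl, -⟩ := Matrix.isRepresentation.toEnd_exists_mem_ideal R b hb f ⊤ (by simp)
  have hdeg : A.1.charpoly.natDegree = n := by simp [Matrix.charpoly_natDegree_eq_dim]
  have hA : Polynomial.aeval A A.1.charpoly = 0 := by
    ext1
    rw [Polynomial.aeval_subalgebra_coe, Matrix.aeval_self_charpoly, Subalgebra.coe_zero]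
  have h := congr(Polynomial.aeval (Matrix.isRepresentation.toEnd R b hb A)
    $(A.1.charpoly_monic.as_sum))
  rw [Polynomial.aeval_algHom_apply, hA, map_zero, hdeg] at h
  refine ⟨fun i => A.1.charpoly.coeff i, ?_⟩
  simpa [Polynomial.aeval_def, Polynomial.eval₂_finsetSum, Algebra.smul_def,
    ← Fin.sum_univ_eq_sum_range] using h.symm

section RingHom

variable {R A M : Type*} [CommRing R] [CommRing A] [AddCommGroup M] [Module A M]

theorem exists_pow_add_sum_mul_pow_smul_eq_zero (φ : R →+* A) {n : ℕ} {b : Fin n → M}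
    (hb : ∀ x : M, ∃ g : Fin n → R, x = ∑ i, φ (g i) • b i) (a : A) :
    ∃ c : Fin n → R, ∀ x : M, (a ^ n + ∑ i : Fin n, φ (c i) * a ^ (i : ℕ)) • x = 0 := by
  let : Module R M := Module.compHom M φ
  have : SMulCommClass A R M := ⟨fun a r x => smul_comm a (φ r) x⟩
  have hspan : Submodule.span R (Set.range b) = ⊤ := by
    refine Submodule.eq_top_iff'.2 fun x => ?_
    obtain ⟨g, rfl⟩ := hb x
    exact Submodule.sum_mem _ fun i _ => Submodule.smul_mem _ (g i) (Submodule.subset_span ⟨i, rfl⟩)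
  obtain ⟨c, hc⟩ :=
    Module.End.exists_pow_add_sum_smul_pow_eq_zero hspan (Module.toModuleEnd R M a)
  refine ⟨c, fun x => ?_⟩
  simp_rw [← map_pow] at hc
  have h := congr($hc x)
  simp only [LinearMap.add_apply, LinearMap.coe_sum, Finset.sum_apply, LinearMap.smul_apply,
    Module.toModuleEnd_apply, DistribSMul.toLinearMap_apply, LinearMap.zero_apply] at h
  simp only [add_smul, Finset.sum_smul, mul_smul]
  -- `c i • y` unfolds to `φ (c i) • y` in the module structure `Module.compHom M φ`.
  exact h

theorem PowerSeries.mk_eq_C_add_X_mul_mk (a : ℕ → R) :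
    mk a = C (a 0) + X * mk fun j => a (j + 1) := by
  ext (_ | j) <;> simp [coeff_succ_X_mul]

theorem exists_eq_sum_smul_of_isHausdorff (φ : R⟦X⟧ →+* A) [IsHausdorff (Ideal.span {φ X}) M]
    {n : ℕ} {b : Fin n → M}
    (hb : ∀ x : M, ∃ (c : Fin n → R) (y : M), x = ∑ i, φ (C (c i)) • b i + φ X • y) (x : M) :
    ∃ g : Fin n → R⟦X⟧, x = ∑ i, φ (g i) • b i := by
  choose c y hcy using hb
  let g (x : M) (i : Fin n) : R⟦X⟧ := mk fun j => c (y^[j] x) i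
  have hg (x : M) (i : Fin n) : g x i = C (c x i) + X * g (y x) i := mk_eq_C_add_X_mul_mk _
  let e (x : M) : M := x - ∑ i, φ (g x i) • b i
  have he (x : M) : e x = φ X • e (y x) := by
    simp only [e, hg x, map_add, map_mul, add_smul, mul_smul, Finset.sum_add_distrib, smul_sub,
      Finset.smul_sum]
    nth_rewrite 1 [hcy x]
    abel
  have hek (k : ℕ) : ∀ x, e x = φ X ^ k • e (y^[k] x) := by
    induction k with
    | zero => simp
    | succ k ih => intro x; rw [ih, he, Function.iterate_succ_apply', pow_succ, mul_smul]
  refine ⟨g x, sub_eq_zero.1 (IsHausdorff.haus ‹_› (e x) fun k => SModEq.zero.2 ?_)⟩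
  rw [hek k x]
  exact Submodule.smul_mem_smul (Ideal.pow_mem_pow (Ideal.mem_span_singleton_self _) k)
    Submodule.mem_top

end RingHom

open scoped Pointwise in
theorem exists_eq_sum_smul_add_smul_of_span_mkQ_eq_top {R A M : Type*} [CommRing R] [CommRing A]
    [Algebra R A] [AddCommGroup M] [Module A M] [Module R M] [IsScalarTower R A M] (s : A)
    {n : ℕ} {b : Fin n → M}
    (hb : Submodule.span R (Set.range ((Ideal.span {s} • ⊤ : Submodule A M).mkQ ∘ b)) = ⊤)
    (x : M) : ∃ (c : Fin n → R) (y : M), x = ∑ i, c i • b i + s • y := by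
  obtain ⟨c, hc⟩ := (Submodule.mem_span_range_iff_exists_fun R).1
    (hb ▸ Submodule.mem_top : (Ideal.span {s} • ⊤ : Submodule A M).mkQ x ∈ _)
  have hmem : x - ∑ i, c i • b i ∈ s • (⊤ : Submodule A M) := by
    rw [← Submodule.ideal_span_singleton_smul, ← Submodule.Quotient.mk_eq_zero,
      ← Submodule.mkQ_apply, map_sub, ← hc, map_sum]
    simp
  obtain ⟨y, -, hy⟩ := (Submodule.mem_smul_pointwise_iff_exists _ _ _).1 hmem
  exact ⟨c, y, by rw [hy, add_sub_cancel]⟩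

/-- If `M` is a finitely generated `Λ`-module such that `M/SM` is generated
by `n` elements as a `ℤ_p`-module, then there are `g₀, …, g_{n-1} ∈ ℤ_p[[S]]` such that
`f(S,T) = Tⁿ + g_{n-1}(S)·T^{n-1} + ⋯ + g₀(S)` annihilates `M`. -/
theorem annihilator_of_fg_quotient (p : ℕ) [Fact p.Prime] (n : ℕ)
    (M : Type*) [AddCommGroup M] [Module (Lambda p) M]
    [Module ℤ_[p] M] [IsScalarTower ℤ_[p] (Lambda p) M]
    [Module.Finite (Lambda p) M]
    (v : Fin n → (M ⧸ ((Ideal.span {Svar p}) • (⊤ : Submodule (Lambda p) M))))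
    (hv : Submodule.span ℤ_[p] (Set.range v) = ⊤) :
    ∃ g : Fin n → PowerSeries ℤ_[p],
      ∀ m : M,
        ((Tvar p) ^ n
            + ∑ i : Fin n, PowerSeries.C (R := PowerSeries ℤ_[p]) (g i) * (Tvar p) ^ (i : ℕ)) • m
          = 0 := by
  obtain ⟨m, rfl⟩ :
      ∃ m : Fin n → M, (Ideal.span {Svar p} • ⊤ : Submodule (Lambda p) M).mkQ ∘ m = v :=
    ⟨_, funext fun i => (Submodule.Quotient.mk_surjective _ (v i)).choose_spec⟩
  have hS : Ideal.span {Svar p} ≠ ⊤ := by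
    simp [Ideal.span_singleton_eq_top, PowerSeries.isUnit_iff_constantCoeff]
  have : IsHausdorff (Ideal.span {Svar p}) M := .of_isLocalRing _ _ hS
  have hlift (x : M) :
      ∃ (c : Fin n → ℤ_[p]) (y : M), x = ∑ i, C (C (c i)) • m i + Svar p • y := by
    simpa [← algebraMap_smul (Lambda p), PowerSeries.algebraMap_apply] using
      exists_eq_sum_smul_add_smul_of_span_mkQ_eq_top (Svar p) hv x
  -- `φ = C` rather than `algebraMap`: the instance `Algebra ℤ_[p]⟦X⟧ Λ` acts coefficientwise in `T`.
  have hgen := exists_eq_sum_smul_of_isHausdorff (M := M) (C (R := ℤ_[p]⟦X⟧)) hlift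
  exact exists_pow_add_sum_mul_pow_smul_eq_zero (C (R := ℤ_[p]⟦X⟧)) hgen (Tvar p)
end

section
/- Let p be a prime number and R = Z_p[[T]] the formal power series ring over the p-adic integers Z_p. Let l ≥ 1, let f_1, …, f_l ∈ R be power series whose constant terms f_j(0) ∈ Z_p are all nonzero, let n_1, …, n_l be positive integers, and set E = ⊕_{j=1}^{l} R/(f_j^{n_j}). Suppose M is an R-module admitting an injective R-module homomorphism Φ : M → E whose cokernel is finite. Then the quotient M/TM is finite and its cardinality equals the cardinality of Z_p/cZ_p, where c = ∏_{j=1}^{l} f_j(0)^{n_j} ∈ Z_p. -/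
open PowerSeries DirectSum Pointwise

/-! Since `X` acts injectively on `E = ⊕ Z_p[[X]]/(f_j^{n_j})`, the index `[E : X Φ(M)]` can be
computed through `Φ` as `[M : XM] [E : Φ(M)]` and through `X` as `[E : Φ(M)] [E : XE]`; cancelling
the finite index `[E : Φ(M)]` gives `#(M/XM) = #(E/XE)`. Each summand of `E/XE` is
`Z_p[[X]]/(f_j^{n_j}, X) ≅ Z_p/(f_j(0)^{n_j})`, and `#(Z_p/(ab)) = #(Z_p/(a)) #(Z_p/(b))` by the
same index argument applied to multiplication by `a`. -/

theorem Submodule.index_map_of_injective {R M E : Type*} [Ring R] [AddCommGroup M] [Module R M]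
    [AddCommGroup E] [Module R E] {f : M →ₗ[R] E} (hf : Function.Injective f)
    (N : Submodule R M) :
    (N.map f).toAddSubgroup.index =
      N.toAddSubgroup.index * (LinearMap.range f).toAddSubgroup.index := by
  rw [Submodule.map_toAddSubgroup, LinearMap.range_toAddSubgroup]
  exact AddSubgroup.index_map_of_injective _ hf

section Index

variable {R M E : Type*} [CommRing R] [AddCommGroup M] [Module R M] [AddCommGroup E] [Module R E]

theorem Submodule.map_lsmul (r : R) (N : Submodule R E) :
    N.map (LinearMap.lsmul R E r) = r • N := rfl

theorem Ideal.smul_span_singleton (a b : R) : a • Ideal.span {b} = Ideal.span {a * b} := by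
  rw [← Submodule.ideal_span_singleton_smul, smul_eq_mul, Ideal.span_singleton_mul_span_singleton]

theorem Ideal.smul_top (a : R) : a • (⊤ : Ideal R) = Ideal.span {a} := by
  rw [← Submodule.ideal_span_singleton_smul, smul_eq_mul, Ideal.mul_top]

theorem Ideal.card_quotient_span_mul {a : R} (ha : IsSMulRegular R a) (b : R) :
    Nat.card (R ⧸ Ideal.span {a * b}) =
      Nat.card (R ⧸ Ideal.span {a}) * Nat.card (R ⧸ Ideal.span {b}) := by
  have h := Submodule.index_map_of_injective (f := LinearMap.lsmul R R a) ha (Ideal.span {b})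
  rw [Submodule.map_lsmul, LinearMap.range_eq_map, Submodule.map_lsmul, Ideal.smul_top,
    Ideal.smul_span_singleton] at h
  exact h.trans (mul_comm _ _)

theorem Ideal.card_quotient_span_prod {ι : Type*} (s : Finset ι) {a : ι → R}
    (ha : ∀ i ∈ s, IsSMulRegular R (a i)) :
    Nat.card (R ⧸ Ideal.span {∏ i ∈ s, a i}) = ∏ i ∈ s, Nat.card (R ⧸ Ideal.span {a i}) := by
  induction s using Finset.cons_induction with
  | empty => simp
  | cons i s hi ih =>
    rw [Finset.prod_cons, Finset.prod_cons,
      Ideal.card_quotient_span_mul (ha i (Finset.mem_cons_self i s)),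
      ih fun j hj => ha j (Finset.mem_cons_of_mem hj)]

theorem QuotSMulTop.card_eq_of_injective {r : R} (hr : IsSMulRegular E r) {φ : M →ₗ[R] E}
    (hφ : Function.Injective φ) [Finite (E ⧸ LinearMap.range φ)] :
    Nat.card (QuotSMulTop r M) = Nat.card (QuotSMulTop r E) := by
  have hM := Submodule.index_map_of_injective hφ (r • ⊤)
  have hE := Submodule.index_map_of_injective (f := LinearMap.lsmul R E r) hr (LinearMap.range φ)
  rw [Submodule.map_pointwise_smul, Submodule.map_top] at hM
  rw [Submodule.map_lsmul, LinearMap.range_eq_map (LinearMap.lsmul R E r),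
    Submodule.map_lsmul] at hE
  have : Finite (E ⧸ (LinearMap.range φ).toAddSubgroup) := ‹_›
  have hφ' : (LinearMap.range φ).toAddSubgroup.index ≠ 0 := AddSubgroup.index_ne_zero_of_finite
  exact Nat.eq_of_mul_eq_mul_right (Nat.pos_of_ne_zero hφ')
    (hM.symm.trans (hE.trans (mul_comm _ _)))

end Index

section QuotSMulTop

variable {R : Type*} [CommRing R]

noncomputable def QuotSMulTop.quotientEquiv (r : R) (I : Ideal R) :
    QuotSMulTop r (R ⧸ I) ≃ₗ[R] R ⧸ (I ⊔ Ideal.span {r}) :=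
  Submodule.quotEquivOfEq _ _ (by
    rw [← Submodule.range_mkQ I, LinearMap.range_eq_map, ← Submodule.map_pointwise_smul,
      Ideal.smul_top]) ≪≫ₗ
    Submodule.quotientQuotientEquivQuotientSup I (Ideal.span {r})

noncomputable def QuotSMulTop.directSumEquiv (r : R) {ι : Type*} [DecidableEq ι]
    (M : ι → Type*) [∀ i, AddCommGroup (M i)] [∀ i, Module R (M i)] :
    QuotSMulTop r (⨁ i, M i) ≃ₗ[R] ⨁ i, QuotSMulTop r (M i) :=
  QuotSMulTop.equivQuotTensor r _ ≪≫ₗ TensorProduct.directSumRight R R _ _ ≪≫ₗ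
    DFinsupp.mapRange.linearEquiv fun i => (QuotSMulTop.equivQuotTensor r (M i)).symm

theorem QuotSMulTop.card_directSum (r : R) {ι : Type*} [Fintype ι] [DecidableEq ι]
    (M : ι → Type*) [∀ i, AddCommGroup (M i)] [∀ i, Module R (M i)] :
    Nat.card (QuotSMulTop r (⨁ i, M i)) = ∏ i, Nat.card (QuotSMulTop r (M i)) := by
  rw [Nat.card_congr (QuotSMulTop.directSumEquiv r M).toEquiv,
    Nat.card_congr (DirectSum.linearEquivFunOnFintype R ι _).toEquiv, Nat.card_pi]

theorem DirectSum.isSMulRegular {r : R} {ι : Type*} {M : ι → Type*}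
    [∀ i, AddCommGroup (M i)] [∀ i, Module R (M i)] (h : ∀ i, IsSMulRegular (M i) r) :
    IsSMulRegular (⨁ i, M i) r := fun x y hxy =>
  DFinsupp.ext fun i => h i (by simpa only [DirectSum.smul_apply] using DFinsupp.ext_iff.mp hxy i)

end QuotSMulTop

namespace PowerSeries

variable {A : Type*} [CommRing A]

theorem span_sup_span_X (g : A⟦X⟧) :
    Ideal.span {g} ⊔ Ideal.span {X} = (Ideal.span {constantCoeff g}).comap constantCoeff := by
  apply le_antisymm
  · refine sup_le ?_ ?_ <;> rw [Ideal.span_singleton_le_iff_mem, Ideal.mem_comap]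
    · exact Ideal.mem_span_singleton_self _
    · simp
  · intro h hh
    obtain ⟨a, ha⟩ := Ideal.mem_span_singleton'.mp (Ideal.mem_comap.mp hh)
    have hX : X ∣ h - C a * g := by
      rw [X_dvd_iff]
      simp [ha]
    rw [← add_sub_cancel (C a * g) h]
    exact Ideal.add_mem _
      (Ideal.mem_sup_left (Ideal.mul_mem_left _ _ (Ideal.mem_span_singleton_self g)))
      (Ideal.mem_sup_right (Ideal.mem_span_singleton.mpr hX))

noncomputable def quotientSpanSupSpanXEquiv (g : A⟦X⟧) :
    A⟦X⟧ ⧸ (Ideal.span {g} ⊔ Ideal.span {X}) ≃+* A ⧸ Ideal.span {constantCoeff g} :=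
  let ψ := (Ideal.Quotient.mk (Ideal.span {constantCoeff g})).comp constantCoeff
  (Ideal.quotEquivOfEq (J := RingHom.ker ψ) <| by
      rw [span_sup_span_X, ← RingHom.comap_ker, Ideal.mk_ker]).trans
    (RingHom.quotientKerEquivOfSurjective <|
      Ideal.Quotient.mk_surjective.comp fun a => ⟨C a, constantCoeff_C a⟩)

theorem card_quotSMulTop_X_quotient (g : A⟦X⟧) :
    Nat.card (QuotSMulTop (X : A⟦X⟧) (A⟦X⟧ ⧸ Ideal.span {g})) =
      Nat.card (A ⧸ Ideal.span {constantCoeff g}) :=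
  Nat.card_congr <| (QuotSMulTop.quotientEquiv X _).toEquiv.trans
    (quotientSpanSupSpanXEquiv g).toEquiv

theorem isSMulRegular_X_quotient {g : A⟦X⟧} (hg : IsSMulRegular A (constantCoeff g)) :
    IsSMulRegular (A⟦X⟧ ⧸ Ideal.span {g}) (X : A⟦X⟧) := by
  rw [isSMulRegular_quotient_iff_mem_of_smul_mem]
  intro h hXh
  obtain ⟨c, hc⟩ := Ideal.mem_span_singleton'.mp hXh
  have hc0 : constantCoeff c = 0 := hg <| by
    simpa [mul_comm] using congrArg constantCoeff hc
  obtain ⟨d, rfl⟩ := X_dvd_iff.mpr hc0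
  exact Ideal.mem_span_singleton'.mpr ⟨d, X_mul_cancel (by rw [← smul_eq_mul X h, ← hc]; ring)⟩

end PowerSeries

theorem PadicInt.finite_quotient_span_singleton {p : ℕ} [Fact p.Prime] {c : ℤ_[p]} (hc : c ≠ 0) :
    Finite (ℤ_[p] ⧸ Ideal.span {c}) := by
  obtain ⟨n, hn⟩ := PadicInt.ideal_eq_span_pow_p (s := Ideal.span {c}) (by simpa using hc)
  rw [hn, ← PadicInt.ker_toZModPow]
  have : NeZero (p ^ n) := ⟨pow_ne_zero _ (Fact.out : p.Prime).ne_zero⟩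
  exact .of_equiv _ (RingHom.quotientKerEquivOfSurjective (ZMod.ringHom_surjective _)).symm.toEquiv

theorem card_coinvariants_of_pseudo_iso_general (p : ℕ) [Fact p.Prime] (l : ℕ)
    (f : Fin l → PowerSeries ℤ_[p])
    (hf : ∀ j, PowerSeries.constantCoeff (f j) ≠ 0)
    (n : Fin l → ℕ)
    (M : Type*) [AddCommGroup M] [Module (PowerSeries ℤ_[p]) M]
    (Φ : M →ₗ[PowerSeries ℤ_[p]]
      (⨁ j : Fin l, PowerSeries ℤ_[p] ⧸ Ideal.span {f j ^ n j}))
    (hΦ : Function.Injective Φ)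
    (hcoker : Finite
      (@HasQuotient.Quotient _ _ (Submodule.hasQuotient
        (M := ⨁ j : Fin l, PowerSeries ℤ_[p] ⧸ Ideal.span {f j ^ n j})) (LinearMap.range Φ))) :
    Finite (M ⧸ ((Ideal.span {(PowerSeries.X : PowerSeries ℤ_[p])}) •
        (⊤ : Submodule (PowerSeries ℤ_[p]) M))) ∧
    Nat.card (M ⧸ ((Ideal.span {(PowerSeries.X : PowerSeries ℤ_[p])}) •
        (⊤ : Submodule (PowerSeries ℤ_[p]) M)))
      = Nat.card (ℤ_[p] ⧸
          Ideal.span {∏ j : Fin l, (PowerSeries.constantCoeff (f j)) ^ n j}) := by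
  have hg : ∀ j, constantCoeff (f j ^ n j) ≠ 0 := fun j => by
    rw [map_pow]; exact pow_ne_zero _ (hf j)
  have hcard : Nat.card (QuotSMulTop (X : ℤ_[p]⟦X⟧) M) =
      Nat.card (ℤ_[p] ⧸ Ideal.span {∏ j, constantCoeff (f j) ^ n j}) := by
    calc Nat.card (QuotSMulTop (X : ℤ_[p]⟦X⟧) M)
        = Nat.card (QuotSMulTop X (⨁ j, ℤ_[p]⟦X⟧ ⧸ Ideal.span {f j ^ n j})) :=
          QuotSMulTop.card_eq_of_injective (DirectSum.isSMulRegular fun j =>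
            isSMulRegular_X_quotient (IsSMulRegular.of_ne_zero (hg j))) hΦ
      _ = ∏ j, Nat.card (ℤ_[p] ⧸ Ideal.span {constantCoeff (f j ^ n j)}) := by
          simp only [QuotSMulTop.card_directSum, card_quotSMulTop_X_quotient]
      _ = _ := by
          simp only [map_pow]
          exact (Ideal.card_quotient_span_prod _ fun j _ =>
            IsSMulRegular.of_ne_zero (pow_ne_zero _ (hf j))).symm
  rw [Submodule.ideal_span_singleton_smul]
  have hc : ∏ j, constantCoeff (f j) ^ n j ≠ 0 :=
    Finset.prod_ne_zero_iff.mpr fun j _ => pow_ne_zero _ (hf j)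
  have := PadicInt.finite_quotient_span_singleton hc
  exact ⟨Nat.finite_of_card_ne_zero (hcard ▸ Nat.card_pos.ne'), hcard⟩

/-- Let `R = ℤ_p[[T]]`, let `f₁, …, f_l ∈ R` have nonzero constant terms,
`n₁, …, n_l ≥ 1`, and `E = ⊕ R/(f_j^{n_j})`. If `M` is an `R`-module admitting an injective
`R`-homomorphism into `E` with finite cokernel, then `M/TM` is finite of cardinality
`#(ℤ_p / c·ℤ_p)` where `c = ∏ f_j(0)^{n_j}`. -/
theorem card_coinvariants_of_pseudo_iso (p : ℕ) [Fact p.Prime] (l : ℕ) (hl : 1 ≤ l)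
    (f : Fin l → PowerSeries ℤ_[p])
    (hf : ∀ j, PowerSeries.constantCoeff (f j) ≠ 0)
    (n : Fin l → ℕ) (hn : ∀ j, 0 < n j)
    (M : Type*) [AddCommGroup M] [Module (PowerSeries ℤ_[p]) M]
    (Φ : M →ₗ[PowerSeries ℤ_[p]]
      (⨁ j : Fin l, PowerSeries ℤ_[p] ⧸ Ideal.span {f j ^ n j}))
    (hΦ : Function.Injective Φ)
    (hcoker : Finite
      (@HasQuotient.Quotient _ _ (Submodule.hasQuotient
        (M := ⨁ j : Fin l, PowerSeries ℤ_[p] ⧸ Ideal.span {f j ^ n j})) (LinearMap.range Φ))) :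
    Finite (M ⧸ ((Ideal.span {(PowerSeries.X : PowerSeries ℤ_[p])}) •
        (⊤ : Submodule (PowerSeries ℤ_[p]) M))) ∧
    Nat.card (M ⧸ ((Ideal.span {(PowerSeries.X : PowerSeries ℤ_[p])}) •
        (⊤ : Submodule (PowerSeries ℤ_[p]) M)))
      = Nat.card (ℤ_[p] ⧸
          Ideal.span {∏ j : Fin l, (PowerSeries.constantCoeff (f j)) ^ n j}) :=
  card_coinvariants_of_pseudo_iso_general p l f hf n M Φ hΦ hcoker
end

section
/- Let p be a prime number and m ≥ 0 an integer. Let H be a Z_p-submodule of Z_p × Z_p such that: (i) the quotient (Z_p × Z_p)/H is isomorphic to Z_p as a Z_p-module; (ii) H + Z_p·(1,0) = Z_p × Z_p; and (iii) H + Z_p·(0,1) = p^m Z_p × Z_p. Then there exists a unit u ∈ Z_p^× such that H = Z_p·(u·p^m, 1). -/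
/-- Let `H ≤ ℤ_p × ℤ_p` be a `ℤ_p`-submodule such that the quotient
`(ℤ_p × ℤ_p)/H` is isomorphic to `ℤ_p`, `H + ℤ_p·(1,0) = ℤ_p × ℤ_p`, and
`H + ℤ_p·(0,1) = p^m ℤ_p × ℤ_p`. Then `H = ℤ_p·(u·p^m, 1)` for some unit `u ∈ ℤ_pˣ`. -/
theorem submodule_eq_span_unit_pow (p : ℕ) [Fact p.Prime] (m : ℕ)
    (H : Submodule ℤ_[p] (ℤ_[p] × ℤ_[p]))
    (h1 : Nonempty (((ℤ_[p] × ℤ_[p]) ⧸ H) ≃ₗ[ℤ_[p]] ℤ_[p]))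
    (h2 : H ⊔ Submodule.span ℤ_[p] {((1 : ℤ_[p]), (0 : ℤ_[p]))} = ⊤)
    (h3 : H ⊔ Submodule.span ℤ_[p] {((0 : ℤ_[p]), (1 : ℤ_[p]))}
        = Submodule.prod (Ideal.span {(p : ℤ_[p]) ^ m} : Submodule ℤ_[p] ℤ_[p]) (⊤ : Submodule ℤ_[p] ℤ_[p])) :
    ∃ u : ℤ_[p]ˣ,
      H = Submodule.span ℤ_[p] {(((u : ℤ_[p]) * (p : ℤ_[p]) ^ m, 1) : ℤ_[p] × ℤ_[p])} := by
  obtain ⟨e⟩ := h1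
  -- Step 1: get (-c, 1) ∈ H from h2
  have h01 : ((0:ℤ_[p]), (1:ℤ_[p])) ∈ H ⊔ Submodule.span ℤ_[p] {((1:ℤ_[p]),(0:ℤ_[p]))} := by
    rw [h2]; exact Submodule.mem_top
  rw [Submodule.mem_sup] at h01
  obtain ⟨h, hH, z, hz, hsum⟩ := h01
  rw [Submodule.mem_span_singleton] at hz
  obtain ⟨c, rfl⟩ := hz
  have hh : h = (-c, 1) := by
    have : h = ((0:ℤ_[p]),(1:ℤ_[p])) - c • ((1:ℤ_[p]),(0:ℤ_[p])) := by
      rw [← hsum]; ring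
    simpa [Prod.ext_iff] using this
  subst hh
  -- Step 2: (x,0) ∈ H → x = 0
  have hker : ∀ x : ℤ_[p], (x, (0:ℤ_[p])) ∈ H → x = 0 := by
    intro x hx
    by_contra hx0
    have hq : x • (Submodule.Quotient.mk ((1:ℤ_[p]),(0:ℤ_[p])) : _ ⧸ H) = 0 := by
      rw [← Submodule.Quotient.mk_smul, Submodule.Quotient.mk_eq_zero]
      simpa using hx
    have hmul := congrArg e hq
    rw [map_smul, map_zero, smul_eq_mul] at hmul
    have he0 : e (Submodule.Quotient.mk ((1:ℤ_[p]),(0:ℤ_[p]))) = 0 := by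
      rcases mul_eq_zero.mp hmul with h' | h'
      · exact absurd h' hx0
      · exact h'
    have h10 : ((1:ℤ_[p]),(0:ℤ_[p])) ∈ H := by
      have := e.injective (by rw [he0, map_zero] :
        e (Submodule.Quotient.mk ((1:ℤ_[p]),(0:ℤ_[p]))) = e 0)
      rwa [Submodule.Quotient.mk_eq_zero] at this
    have htop : H = ⊤ := by
      rw [eq_top_iff]
      rintro ⟨a, b⟩ -
      have heq : ((a,b) : ℤ_[p] × ℤ_[p]) = (a + b*c) • ((1:ℤ_[p]),(0:ℤ_[p])) + b • (-c, 1) := by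
        simp [Prod.ext_iff]
        try ring
      rw [heq]
      exact H.add_mem (H.smul_mem _ h10) (H.smul_mem _ hH)
    haveI : Subsingleton ((ℤ_[p] × ℤ_[p]) ⧸ H) :=
      Submodule.Quotient.subsingleton_iff.mpr htop
    exact one_ne_zero (e.symm.injective (Subsingleton.elim _ _))
  -- Step 3: H = span {(-c, 1)}
  have hspan : H = Submodule.span ℤ_[p] {((-c, 1) : ℤ_[p] × ℤ_[p])} := by
    apply le_antisymm
    · rintro ⟨x, y⟩ hxy
      have hmem : ((x,y) : ℤ_[p] × ℤ_[p]) - y • (-c, 1) ∈ H :=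
        H.sub_mem hxy (H.smul_mem _ hH)
      have hx0 : x - y * (-c) = 0 := by
        apply hker
        simpa [Prod.ext_iff] using hmem
      rw [Submodule.mem_span_singleton]
      exact ⟨y, by simp [Prod.ext_iff]; linear_combination -hx0⟩
    · rw [Submodule.span_le, Set.singleton_subset_iff]; exact hH
  -- Step 4: -c = e' * p^m for some e'
  have hcmem : (-c : ℤ_[p]) ∈ Ideal.span {(p : ℤ_[p]) ^ m} := by
    have : ((-c, 1) : ℤ_[p] × ℤ_[p]) ∈ Submodule.prod
        (Ideal.span {(p : ℤ_[p]) ^ m} : Submodule ℤ_[p] ℤ_[p]) ⊤ := by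
      rw [← h3]
      exact Submodule.mem_sup_left hH
    exact this.1
  rw [Ideal.mem_span_singleton] at hcmem
  obtain ⟨v, hv⟩ := hcmem
  -- Step 5: (p^m, -d) ∈ H for some d
  have hpm : ((p:ℤ_[p])^m, (0:ℤ_[p])) ∈ H ⊔ Submodule.span ℤ_[p] {((0:ℤ_[p]),(1:ℤ_[p]))} := by
    rw [h3]
    exact ⟨Ideal.mem_span_singleton_self _, Submodule.mem_top⟩
  rw [Submodule.mem_sup] at hpm
  obtain ⟨h', hH', z', hz', hsum'⟩ := hpm
  rw [Submodule.mem_span_singleton] at hz'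
  obtain ⟨d, rfl⟩ := hz'
  have hh' : h' = ((p:ℤ_[p])^m, -d) := by
    have : h' = (((p:ℤ_[p])^m),(0:ℤ_[p])) - d • ((0:ℤ_[p]),(1:ℤ_[p])) := by
      rw [← hsum']; ring
    simpa [Prod.ext_iff] using this
  subst hh'
  rw [hspan, Submodule.mem_span_singleton] at hH'
  obtain ⟨w, hw⟩ := hH'
  have hw' : -(w * c) = (p:ℤ_[p])^m ∧ w = -d := by simpa [Prod.ext_iff] using hw
  have hw1 := hw'.1
  have hpm0 : ((p:ℤ_[p])^m) ≠ 0 :=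
    pow_ne_zero _ (Nat.cast_ne_zero.mpr (Fact.out : p.Prime).ne_zero)
  have hunit : w * v = 1 := by
    have : ((p:ℤ_[p])^m) * (w * v) = ((p:ℤ_[p])^m) * 1 := by
      linear_combination hw1 - w * hv
    exact mul_left_cancel₀ hpm0 this
  refine ⟨⟨v, w, mul_comm w v ▸ hunit, hunit⟩, ?_⟩
  have hc : (-c : ℤ_[p]) = v * (p:ℤ_[p])^m := by rw [hv]; ring
  rw [hspan, hc]
end

section
/- Let R be a Noetherian unique factorization domain and X an R-module with no non-trivial pseudo-null submodule. Then for every element x ∈ X, the annihilator ideal Ann_R(x) = { a ∈ R : a·x = 0 } is a principal ideal of R. Equivalently, every cyclic R-submodule Y of X has principal annihilator ideal Ann_R(Y). -/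
/-!
Let `I = Ann(x) ≠ 0` and let `d` be a maximal common divisor of the elements of `I`, which exists
because divisibility is well founded. Then no prime `p` divides every element of `Ann(d • x)`,
since otherwise `p * d` would divide all of `I`. By prime avoidance applied to the prime factors
of some `a ≠ 0` in `I ⊆ Ann(d • x)`, the ideal `Ann(d • x)` contains an element `b` relatively
prime to `a`. Hence `R ∙ (d • x)` is pseudo-null, so `d • x = 0` and `I = (d)`.
-/

open UniqueFactorizationMonoid

theorem exists_maximal_common_divisor {α : Type*} [CommMonoidWithZero α] [IsCancelMulZero α]
    [WfDvdMonoid α] {S : Set α} {a : α} (ha : a ∈ S) (ha0 : a ≠ 0) :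
    ∃ d, (∀ s ∈ S, d ∣ s) ∧ ∀ p, ¬IsUnit p → ∃ s ∈ S, ¬p * d ∣ s := by
  -- Maximality of `d` is minimality of the cofactor `a / d`.
  obtain ⟨e, ⟨d, hdS, hade⟩, hmin⟩ := (wellFounded_dvdNotUnit (α := α)).has_min
    {e | ∃ d, (∀ s ∈ S, d ∣ s) ∧ a = e * d} ⟨a, 1, fun s _ => one_dvd s, (mul_one a).symm⟩
  refine ⟨d, hdS, fun p hp => ?_⟩
  by_contra! hpd
  obtain ⟨f, hf⟩ := hpd a ha
  have hd0 : d ≠ 0 := by rintro rfl; exact ha0 (by rw [hade, mul_zero])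
  have hf0 : f ≠ 0 := by rintro rfl; exact ha0 (by rw [hf, mul_zero])
  have hefp : e = f * p := mul_right_cancel₀ hd0 (by rw [← hade, hf]; ac_rfl)
  exact hmin f ⟨p * d, hpd, by rw [hf, mul_comm]⟩ ⟨hf0, p, hp, hefp⟩

theorem Ideal.exists_mem_isRelPrime_of_forall_not_le_span_prime {R : Type*} [CommRing R]
    [IsDomain R] [UniqueFactorizationMonoid R] {J : Ideal R} {a : R} (ha0 : a ≠ 0)
    (hJ : ∀ p, Prime p → ¬J ≤ Ideal.span {p}) : ∃ b ∈ J, IsRelPrime a b := by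
  classical
  have hprime : ∀ p ∈ (factors a).toFinset, Prime p := fun p hp =>
    prime_of_factor p (Multiset.mem_toFinset.1 hp)
  have hJ' : ¬(J : Set R) ⊆ ⋃ p ∈ ((factors a).toFinset : Set R), (Ideal.span {p} : Set R) := by
    rw [Ideal.subset_union_prime 0 0 fun p hp _ _ =>
      (Ideal.span_singleton_prime (hprime p hp).ne_zero).2 (hprime p hp)]
    rintro ⟨p, hp, hle⟩
    exact hJ p (hprime p hp) hle
  obtain ⟨b, hbJ, hb⟩ := Set.not_subset.1 hJ'
  refine ⟨b, hbJ, WfDvdMonoid.isRelPrime_of_no_irreducible_factors (by simp [ha0])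
    fun z hz hza hzb => hb ?_⟩
  obtain ⟨q, hq, hzq⟩ := exists_mem_factors_of_dvd ha0 hz hza
  exact Set.mem_biUnion (Multiset.mem_toFinset.2 hq)
    (Ideal.mem_span_singleton.2 (hzq.symm.dvd.trans hzb))

theorem annihilator_span_singleton_isPrincipal {R X : Type*} [CommRing R] [IsDomain R]
    [UniqueFactorizationMonoid R] [AddCommGroup X] [Module R X]
    (hX : ∀ (y : X) (a b : R), IsRelPrime a b → a • y = 0 → b • y = 0 → y = 0) (x : X) :
    (Submodule.span R {x}).annihilator.IsPrincipal := by
  set I := (Submodule.span R {x}).annihilator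
  by_cases hI : I = ⊥
  · rw [hI]; infer_instance
  obtain ⟨a, haI, ha0⟩ := Submodule.exists_mem_ne_zero_of_ne_bot hI
  obtain ⟨d, hdvd, hmax⟩ := exists_maximal_common_divisor (S := (I : Set R)) haI ha0
  have hJ : ∀ p, Prime p → ¬(Submodule.span R {d • x}).annihilator ≤ Ideal.span {p} := by
    intro p hp hle
    obtain ⟨s, hsI, hs⟩ := hmax p hp.not_isUnit
    obtain ⟨t, rfl⟩ := hdvd s hsI
    have ht : t ∈ (Submodule.span R {d • x}).annihilator := by
      rw [Submodule.mem_annihilator_span_singleton, smul_smul, mul_comm]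
      exact (Submodule.mem_annihilator_span_singleton x _).1 hsI
    obtain ⟨c, hc⟩ := Ideal.mem_span_singleton.1 (hle ht)
    exact hs ⟨c, by rw [hc]; ring⟩
  obtain ⟨b, hb, hab⟩ := Ideal.exists_mem_isRelPrime_of_forall_not_le_span_prime ha0 hJ
  have hdx : d • x = 0 := by
    refine hX _ a b hab ?_ ((Submodule.mem_annihilator_span_singleton _ b).1 hb)
    rw [smul_comm, (Submodule.mem_annihilator_span_singleton x a).1 haI, smul_zero]
  refine ⟨d, le_antisymm (fun s hs => Ideal.mem_span_singleton.2 (hdvd s hs)) ?_⟩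
  rw [Ideal.submodule_span_eq, Ideal.span_le, Set.singleton_subset_iff]
  exact (Submodule.mem_annihilator_span_singleton x d).2 hdx

theorem annihilator_isPrincipal_of_no_pseudoNull_general
    (R : Type*) [CommRing R] [IsDomain R] [UniqueFactorizationMonoid R]
    (X : Type*) [AddCommGroup X] [Module R X]
    (hX : ∀ N : Submodule R X,
      (∃ a b : R, IsRelPrime a b ∧ (∀ x ∈ N, a • x = 0) ∧ (∀ x ∈ N, b • x = 0)) → N = ⊥) :
    (∀ x : X, (Submodule.span R {x}).annihilator.IsPrincipal) ∧
    (∀ Y : Submodule R X, (∃ x : X, Y = Submodule.span R {x}) →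
      Y.annihilator.IsPrincipal) := by
  have hann := annihilator_span_singleton_isPrincipal (R := R) fun y a b hab ha hb =>
    Submodule.span_singleton_eq_bot.1 <| hX _ ⟨a, b, hab,
      Submodule.mem_annihilator.1 ((Submodule.mem_annihilator_span_singleton y a).2 ha),
      Submodule.mem_annihilator.1 ((Submodule.mem_annihilator_span_singleton y b).2 hb)⟩
  exact ⟨hann, fun Y ⟨x, hY⟩ => hY ▸ hann x⟩

/-- Let `R` be a Noetherian UFD and `X` an `R`-module with no non-trivial
pseudo-null submodule (an `R`-module `N` is pseudo-null if it is annihilated by two relatively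
prime elements of `R`). Then the annihilator of every element of `X` is a principal ideal;
equivalently, every cyclic submodule of `X` has principal annihilator. -/
theorem annihilator_isPrincipal_of_no_pseudoNull
    (R : Type*) [CommRing R] [IsDomain R] [IsNoetherianRing R] [UniqueFactorizationMonoid R]
    (X : Type*) [AddCommGroup X] [Module R X]
    (hX : ∀ N : Submodule R X,
      (∃ a b : R, IsRelPrime a b ∧ (∀ x ∈ N, a • x = 0) ∧ (∀ x ∈ N, b • x = 0)) → N = ⊥) :
    (∀ x : X, (Submodule.span R {x}).annihilator.IsPrincipal) ∧
    (∀ Y : Submodule R X, (∃ x : X, Y = Submodule.span R {x}) →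
      Y.annihilator.IsPrincipal) :=
  annihilator_isPrincipal_of_no_pseudoNull_general R X hX
end

section
/- Let R be a Noetherian unique factorization domain and X an R-module with no non-trivial pseudo-null submodule. Then every associated prime ideal of X — that is, every prime ideal of R of the form Ann_R(x) = { a ∈ R : a·x = 0 } for some x ∈ X — is a principal ideal of R. -/
/-- Let `R` be a Noetherian UFD and `X` an `R`-module with no non-trivial
pseudo-null submodule (an `R`-module `N` is pseudo-null if it is annihilated by two relatively
prime elements of `R`). Then every associated prime of `X`, i.e. every prime ideal of the form
`Ann_R(x)` for some `x ∈ X`, is principal. -/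
theorem associated_prime_isPrincipal_of_no_pseudoNull
    (R : Type*) [CommRing R] [IsDomain R] [IsNoetherianRing R] [UniqueFactorizationMonoid R]
    (X : Type*) [AddCommGroup X] [Module R X]
    (hX : ∀ N : Submodule R X,
      (∃ a b : R, IsRelPrime a b ∧ (∀ x ∈ N, a • x = 0) ∧ (∀ x ∈ N, b • x = 0)) → N = ⊥) :
    ∀ P : Ideal R, P.IsPrime → (∃ x : X, P = (Submodule.span R {x}).annihilator) →
      P.IsPrincipal := by
  intro P hP ⟨x, hx⟩
  by_cases hbot : P = ⊥
  · exact ⟨0, by rw [hbot, Submodule.span_zero_singleton]⟩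
  obtain ⟨p, hpP, hp⟩ := hP.exists_mem_prime_of_ne_bot hbot
  refine ⟨p, le_antisymm ?_ ?_⟩
  · intro b hb
    by_cases hdvd : p ∣ b
    · obtain ⟨c, rfl⟩ := hdvd
      exact Ideal.mem_span_singleton.mpr ⟨c, rfl⟩
    · exfalso
      have hrel : IsRelPrime p b := hp.irreducible.isRelPrime_iff_not_dvd.mpr hdvd
      have hspan : Submodule.span R {x} = ⊥ := by
        refine hX _ ⟨p, b, hrel, ?_, ?_⟩
        · intro y hy
          have := hx ▸ hpP
          exact Submodule.mem_annihilator.mp this y hy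
        · intro y hy
          have := hx ▸ hb
          exact Submodule.mem_annihilator.mp this y hy
      have hxt : P = ⊤ := by
        rw [hx, hspan, Submodule.annihilator_bot]
      exact hP.ne_top hxt
  · rwa [Submodule.span_le, Set.singleton_subset_iff]
end

section
/- Let p be a prime number, Λ = Z_p[[S,T]] the formal power series ring in two variables over the p-adic integers Z_p, and λ ≥ 1 an integer. Let M be a cyclic Λ-module with no non-trivial pseudo-null Λ-submodule such that M/SM is a free Z_p-module of rank λ, and suppose f(S,T) = T^λ + g_{λ−1}(S)·T^{λ−1} + … + g_1(S)·T + g_0(S), with g_i(S) ∈ Z_p[[S]], annihilates M. Then M is isomorphic to Λ/f(S,T)Λ as a Λ-module. -/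
open PowerSeries

/-!
Let `x` generate `M` and let `f` be the annihilating series. As `S` and `f` are coprime, the
`S`-torsion of `M` is pseudo-null, hence zero. Weierstrass division by `f` modulo `S` shows that
`Λ/(f, S)` is spanned over `ℤ_p` by `1, T, …, T^(λ-1)`, so its surjection onto the free rank-`λ`
module `M/SM` is injective: `ann x ⊆ (f, S)`. Since `M` has no `S`-torsion, this reads
`ann x ⊆ (f) + S · ann x`, and Nakayama's lemma gives `ann x = (f)`.
-/

namespace PowerSeries

variable {A : Type*} [CommRing A]

theorem C_X_dvd_iff {F : A⟦X⟧⟦X⟧} : C X ∣ F ↔ map constantCoeff F = 0 := by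
  constructor
  · rintro ⟨G, rfl⟩
    simp
  · intro hF
    have h : ∀ n, X ∣ coeff n F := fun n ↦ X_dvd_iff.mpr <| by
      simpa using congrArg (coeff n) hF
    choose G hG using h
    exact ⟨mk G, ext fun n ↦ by rw [coeff_C_mul, coeff_mk, hG]⟩

theorem prime_C_X [IsDomain A] : Prime (C X : A⟦X⟧⟦X⟧) := by
  refine ⟨by simpa using C_injective.ne (X_ne_zero (R := A)), fun h ↦ ?_, fun a b ↦ ?_⟩
  · simpa using C_X_dvd_iff.mp (h.dvd (a := 1))
  · simp only [C_X_dvd_iff, map_mul, mul_eq_zero, imp_self]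

theorem isRelPrime_C_X [IsDomain A] {F : A⟦X⟧⟦X⟧} {n : ℕ} (hF : constantCoeff (coeff n F) ≠ 0) :
    IsRelPrime (C X) F := by
  refine prime_C_X.irreducible.isRelPrime_iff_not_dvd.mpr fun h ↦ hF ?_
  simpa using congrArg (coeff n) (C_X_dvd_iff.mp h)

theorem C_X_mem_jacobson_bot : (C X : A⟦X⟧⟦X⟧) ∈ (⊥ : Ideal A⟦X⟧⟦X⟧).jacobson :=
  Ideal.mem_jacobson_bot.mpr fun y ↦ by simp [isUnit_iff_constantCoeff]

theorem isUnit_constantCoeff_coeff_X_pow_add_sum (n : ℕ) (g : Fin n → A⟦X⟧) :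
    IsUnit (constantCoeff (coeff n (X ^ n + ∑ i : Fin n, C (g i) * X ^ (i : ℕ)))) := by
  simp [coeff_X_pow, Finset.sum_eq_zero fun (i : Fin n) _ ↦ if_neg i.is_lt.ne']

theorem map_C_coe_eq_sum {r : Polynomial A} {n : ℕ} (hr : r.degree < n) :
    map C (r : A⟦X⟧) = ∑ i : Fin n, r.coeff i • (X : A⟦X⟧⟦X⟧) ^ (i : ℕ) := by
  ext m : 1
  simp only [coeff_map, Polynomial.coeff_coe, map_sum, LinearMap.map_smul_of_tower, coeff_X_pow,
    smul_ite, smul_zero]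
  rw [Fin.sum_univ_eq_sum_range (fun i ↦ if m = i then r.coeff i • (1 : A⟦X⟧) else 0),
    Finset.sum_ite_eq]
  split_ifs with hm
  · rw [Algebra.smul_def, mul_one]; rfl
  · rw [Polynomial.coeff_eq_zero_of_degree_lt (hr.trans_le (by simpa using hm)), map_zero]

theorem exists_sub_sum_smul_X_pow_mem_span_pair [IsLocalRing A]
    [IsAdicComplete (IsLocalRing.maximalIdeal A) A] {F : A⟦X⟧⟦X⟧} {n : ℕ}
    (hF : IsUnit (constantCoeff (coeff n F))) (a : A⟦X⟧⟦X⟧) :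
    ∃ c : Fin n → A, a - ∑ i : Fin n, c i • (X : A⟦X⟧⟦X⟧) ^ (i : ℕ) ∈ Ideal.span {F, C X} := by
  have hcoeff : coeff n ((map constantCoeff F).map (IsLocalRing.residue A)) ≠ 0 := by
    simpa using hF.map (IsLocalRing.residue A) |>.ne_zero
  obtain ⟨q, r, hdeg, hdiv⟩ :=
    exists_isWeierstrassDivision (map constantCoeff a) fun h ↦ hcoeff (by rw [h, map_zero])
  have hrn : r.degree < n := hdeg.trans_le <| by
    exact_mod_cast ENat.toNat_le_of_le_natCast (order_le n hcoeff)
  have hsection : ∀ φ : A⟦X⟧, map constantCoeff (map C φ) = φ := fun φ ↦ by ext; simp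
  obtain ⟨w, hw⟩ : C X ∣ a - F * map C q - map C r := by
    rw [C_X_dvd_iff, map_sub, map_sub, map_mul, hdiv, hsection, hsection]
    ring
  refine ⟨fun i ↦ r.coeff i, Ideal.mem_span_pair.mpr ⟨map C q, w, ?_⟩⟩
  rw [← map_C_coe_eq_sum hrn]
  linear_combination -hw

end PowerSeries

namespace Submodule

variable {R M : Type*} [CommRing R] [AddCommGroup M] [Module R M]

def IsPseudoNull (N : Submodule R M) : Prop :=
  ∃ a b : R, IsRelPrime a b ∧ (∀ x ∈ N, a • x = 0) ∧ (∀ x ∈ N, b • x = 0)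

theorem eq_zero_of_smul_eq_zero_of_isRelPrime (hpn : ∀ N : Submodule R M, N.IsPseudoNull → N = ⊥)
    {s f : R} (hsf : IsRelPrime s f) (hf : ∀ m : M, f • m = 0) {m : M} (hm : s • m = 0) :
    m = 0 := by
  refine span_singleton_eq_bot.mp <| hpn (R ∙ m) ⟨s, f, hsf, fun y hy ↦ ?_, fun y _ ↦ hf y⟩
  obtain ⟨r, rfl⟩ := mem_span_singleton.mp hy
  rw [smul_comm, hm, smul_zero]

end Submodule

namespace Ideal

open Submodule

variable {R M : Type*} [CommRing R] [AddCommGroup M] [Module R M]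

theorem smul_mem_smul_top_of_mem_span_pair {f s : R} (hf : ∀ m : M, f • m = 0) {j : R}
    (hj : j ∈ Ideal.span {f, s}) (x : M) : j • x ∈ Ideal.span {s} • (⊤ : Submodule R M) := by
  obtain ⟨c, d, rfl⟩ := Ideal.mem_span_pair.mp hj
  rw [add_smul, mul_smul, hf, smul_zero, zero_add, mul_comm, mul_smul]
  exact smul_mem_smul (Ideal.mem_span_singleton_self s) mem_top

variable {A : Type*} [CommRing A] [Algebra A R] [Module A M] [IsScalarTower A R M]

theorem mem_span_pair_of_smul_mem_smul_top {n : ℕ} {x : M} (hx : R ∙ x = ⊤) {f s : R}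
    (hf : ∀ m : M, f • m = 0) {e : Fin n → R}
    (he : ∀ a : R, ∃ c : Fin n → A, a - ∑ i, c i • e i ∈ Ideal.span {f, s})
    (b : Module.Basis (Fin n) A (M ⧸ Ideal.span {s} • (⊤ : Submodule R M))) {a : R}
    (ha : a • x ∈ Ideal.span {s} • (⊤ : Submodule R M)) : a ∈ Ideal.span {f, s} := by
  set N := Ideal.span {s} • (⊤ : Submodule R M)
  let L : (Fin n → A) →ₗ[A] M ⧸ N := N.mkQ.restrictScalars A ∘ₗ
    (LinearMap.toSpanSingleton R M x).restrictScalars A ∘ₗ Fintype.linearCombination A e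
  have hL : ∀ {a : R} {c : Fin n → A}, a - ∑ i, c i • e i ∈ Ideal.span {f, s} →
      L c = N.mkQ (a • x) := fun {a c} hc ↦ by
    change N.mkQ ((∑ i, c i • e i) • x) = N.mkQ (a • x)
    rw [mkQ_apply, mkQ_apply, Submodule.Quotient.eq, ← sub_smul, ← neg_sub, neg_smul]
    exact neg_mem (smul_mem_smul_top_of_mem_span_pair hf hc x)
  have hsurj : Function.Surjective L := by
    intro q
    obtain ⟨m, rfl⟩ := N.mkQ_surjective q
    obtain ⟨a, rfl⟩ := Submodule.mem_span_singleton.mp (hx ▸ mem_top : m ∈ R ∙ x)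
    obtain ⟨c, hc⟩ := he a
    exact ⟨c, hL hc⟩
  have : Module.Finite A (M ⧸ N) := .of_basis b
  have hinj : Function.Injective L := OrzechProperty.injective_of_surjective_of_injective
    b.equivFun.symm.toLinearMap L b.equivFun.symm.injective hsurj
  obtain ⟨c, hc⟩ := he a
  obtain rfl : c = 0 := hinj <| by
    rw [hL hc, mkQ_apply, (Submodule.Quotient.mk_eq_zero N).mpr ha, map_zero]
  simpa using hc

theorem torsionOf_eq_span_singleton [IsNoetherianRing R] {x : M} {f s : R}
    (hs : s ∈ (⊥ : Ideal R).jacobson) (hf : ∀ m : M, f • m = 0)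
    (hs_inj : ∀ m : M, s • m = 0 → m = 0) (hx : ∀ a : R, a • x = 0 → a ∈ Ideal.span {f, s}) :
    Ideal.torsionOf R M x = Ideal.span {f} := by
  refine le_antisymm ?_ ((Ideal.span_singleton_le_iff_mem _).mpr (hf x))
  have hfg : (Ideal.torsionOf R M x).FG := IsNoetherian.noetherian _
  have hsJ : Ideal.span {s} ≤ (⊥ : Ideal R).jacobson := (Ideal.span_singleton_le_iff_mem _).mpr hs
  refine le_of_le_smul_of_le_jacobson_bot hfg hsJ fun a ha ↦ ?_
  obtain ⟨c, d, rfl⟩ := Ideal.mem_span_pair.mp (hx a ha)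
  have hd : d • x = 0 := hs_inj _ <| by
    rwa [Ideal.mem_torsionOf_iff, add_smul, mul_smul, hf, smul_zero, zero_add, mul_smul,
      smul_comm] at ha
  refine add_mem_sup (Ideal.mul_mem_left _ c (Ideal.mem_span_singleton_self f)) ?_
  rw [mul_comm]
  exact smul_mem_smul (Ideal.mem_span_singleton_self s) hd

end Ideal

theorem cyclic_module_iso_quotient_general (p : ℕ) [Fact p.Prime] (lam : ℕ)
    (M : Type*) [AddCommGroup M] [Module (Lambda p) M]
    [Module ℤ_[p] M] [IsScalarTower ℤ_[p] (Lambda p) M]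
    (hcyc : ∃ x : M, Submodule.span (Lambda p) {x} = ⊤)
    (hpn : ∀ N : Submodule (Lambda p) M,
      (∃ a b : Lambda p, IsRelPrime a b ∧ (∀ x ∈ N, a • x = 0) ∧ (∀ x ∈ N, b • x = 0)) →
        N = ⊥)
    (bQ : Module.Basis (Fin lam) ℤ_[p]
      (M ⧸ ((Ideal.span {Svar p}) • (⊤ : Submodule (Lambda p) M))))
    (g : Fin lam → PowerSeries ℤ_[p])
    (hann : ∀ m : M,
      ((Tvar p) ^ lam
          + ∑ i : Fin lam, PowerSeries.C (R := PowerSeries ℤ_[p]) (g i) * (Tvar p) ^ (i : ℕ)) • m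
        = 0) :
    Nonempty (M ≃ₗ[Lambda p]
      (Lambda p ⧸ Ideal.span
        {(Tvar p) ^ lam
          + ∑ i : Fin lam, PowerSeries.C (R := PowerSeries ℤ_[p]) (g i) * (Tvar p) ^ (i : ℕ)})) := by
  obtain ⟨x, hx⟩ := hcyc
  have hf := isUnit_constantCoeff_coeff_X_pow_add_sum lam g
  have hS_torsion_free : ∀ m : M, Svar p • m = 0 → m = 0 := fun _ ↦
    Submodule.eq_zero_of_smul_eq_zero_of_isRelPrime hpn (isRelPrime_C_X hf.ne_zero) hann
  have hann_le : ∀ a : Lambda p, a • x = 0 → a ∈ Ideal.span {_, Svar p} := fun a ha ↦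
    Ideal.mem_span_pair_of_smul_mem_smul_top hx hann
      (exists_sub_sum_smul_X_pow_mem_span_pair hf) bQ (ha ▸ zero_mem _)
  have hann_eq := Ideal.torsionOf_eq_span_singleton (C_X_mem_jacobson_bot (A := ℤ_[p])) hann
    hS_torsion_free hann_le
  exact ⟨((Ideal.quotTorsionOfEquivSpanSingleton _ M x).trans (LinearEquiv.ofTop _ hx)).symm.trans
    (Submodule.quotEquivOfEq _ _ hann_eq)⟩

/-- Let `λ ≥ 1` and let `M` be a cyclic `Λ`-module with no non-trivial
pseudo-null submodule such that `M/SM` is free of rank `λ` over `ℤ_p`, annihilated by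
`f(S,T) = T^λ + g_{λ-1}(S)·T^{λ-1} + ⋯ + g₀(S)` with `gᵢ ∈ ℤ_p[[S]]`.
Then `M ≅ Λ/f(S,T)Λ` as `Λ`-modules. -/
theorem cyclic_module_iso_quotient (p : ℕ) [Fact p.Prime] (lam : ℕ) (hlam : 1 ≤ lam)
    (M : Type*) [AddCommGroup M] [Module (Lambda p) M]
    [Module ℤ_[p] M] [IsScalarTower ℤ_[p] (Lambda p) M]
    (hcyc : ∃ x : M, Submodule.span (Lambda p) {x} = ⊤)
    (hpn : ∀ N : Submodule (Lambda p) M,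
      (∃ a b : Lambda p, IsRelPrime a b ∧ (∀ x ∈ N, a • x = 0) ∧ (∀ x ∈ N, b • x = 0)) →
        N = ⊥)
    (bQ : Module.Basis (Fin lam) ℤ_[p]
      (M ⧸ ((Ideal.span {Svar p}) • (⊤ : Submodule (Lambda p) M))))
    (g : Fin lam → PowerSeries ℤ_[p])
    (hann : ∀ m : M,
      ((Tvar p) ^ lam
          + ∑ i : Fin lam, PowerSeries.C (R := PowerSeries ℤ_[p]) (g i) * (Tvar p) ^ (i : ℕ)) • m
        = 0) :
    Nonempty (M ≃ₗ[Lambda p]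
      (Lambda p ⧸ Ideal.span
        {(Tvar p) ^ lam
          + ∑ i : Fin lam, PowerSeries.C (R := PowerSeries ℤ_[p]) (g i) * (Tvar p) ^ (i : ℕ)})) :=
  cyclic_module_iso_quotient_general p lam M hcyc hpn bQ g hann
end

section
/- Let R be a unique factorization domain and q_1, …, q_l nonzero non-unit elements of R. Then the R-module ⊕_{i=1}^{l} R/(q_i) has no non-trivial pseudo-null submodule: every R-submodule N of ⊕_{i=1}^{l} R/(q_i) for which there exist two relatively prime elements a, b ∈ R with a·N = 0 and b·N = 0 is the zero submodule. -/
open DirectSum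

/-!
If the class of `r` in `R ⧸ (q)` is killed by `a` and `b`, then `q` divides `a * r` and `b * r`.
A UFD is a decomposition monoid, and there relative primality of `a` and `b` forces `q ∣ r`.
A direct sum is handled one component at a time.
-/

-- Write `q = q₁ * q₂` with `q₁ ∣ a` and `q₂ ∣ r`; cancelling `q₂` leaves `q₁ ∣ b * (r / q₂)`,
-- and `q₁` is coprime to `b`.
theorem IsRelPrime.dvd_of_dvd_mul_of_dvd_mul {α : Type*} [CommMonoidWithZero α]
    [IsLeftCancelMulZero α] [DecompositionMonoid α] {a b q r : α} (hab : IsRelPrime a b)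
    (ha : q ∣ a * r) (hb : q ∣ b * r) : q ∣ r := by
  obtain ⟨q₁, q₂, hq₁a, ⟨s, rfl⟩, rfl⟩ := exists_dvd_and_dvd_of_dvd_mul ha
  rcases eq_or_ne q₂ 0 with rfl | hq₂
  · simp
  have hq₁bs : q₁ ∣ b * s := by
    rw [mul_left_comm, mul_comm q₁] at hb
    exact (mul_dvd_mul_iff_left hq₂).mp hb
  rw [mul_comm q₂]
  exact mul_dvd_mul_right ((hab.of_dvd_left hq₁a).dvd_of_dvd_mul_left hq₁bs) q₂

theorem Ideal.Quotient.eq_zero_of_smul_eq_zero_of_isRelPrime {R : Type*} [CommRing R]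
    [IsLeftCancelMulZero R] [DecompositionMonoid R] {q a b : R} (hab : IsRelPrime a b)
    {x : R ⧸ Ideal.span {q}} (ha : a • x = 0) (hb : b • x = 0) : x = 0 := by
  obtain ⟨r, rfl⟩ := Ideal.Quotient.mk_surjective x
  rw [Algebra.smul_def, Ideal.Quotient.algebraMap_eq, ← map_mul,
    Ideal.Quotient.eq_zero_iff_dvd] at ha hb
  rw [Ideal.Quotient.eq_zero_iff_dvd]
  exact hab.dvd_of_dvd_mul_of_dvd_mul ha hb

theorem DirectSum.eq_zero_of_smul_eq_zero {R ι : Type*} [Semiring R] {M : ι → Type*}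
    [∀ i, AddCommMonoid (M i)] [∀ i, Module R (M i)] {a b : R}
    (h : ∀ i (y : M i), a • y = 0 → b • y = 0 → y = 0) {x : ⨁ i, M i}
    (ha : a • x = 0) (hb : b • x = 0) : x = 0 :=
  DFinsupp.ext fun i =>
    h i (x i) (by rw [← DirectSum.smul_apply, ha, DirectSum.zero_apply])
      (by rw [← DirectSum.smul_apply, hb, DirectSum.zero_apply])

theorem elementary_module_no_pseudoNull_general
    (R : Type*) [CommRing R] [IsDomain R] [UniqueFactorizationMonoid R]
    (l : ℕ) (q : Fin l → R) :
    ∀ N : Submodule R (⨁ i : Fin l, R ⧸ Ideal.span {q i}),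
      (∃ a b : R, IsRelPrime a b ∧ (∀ x ∈ N, a • x = 0) ∧ (∀ x ∈ N, b • x = 0)) →
        N = ⊥ := by
  rintro N ⟨a, b, hab, ha, hb⟩
  rw [Submodule.eq_bot_iff]
  intro x hx
  exact DirectSum.eq_zero_of_smul_eq_zero
    (fun _ _ => Ideal.Quotient.eq_zero_of_smul_eq_zero_of_isRelPrime hab) (ha x hx) (hb x hx)

/-- Let `R` be a UFD and `q₁, …, q_l` nonzero non-units of `R`. Then the
`R`-module `⊕ᵢ R/(qᵢ)` has no non-trivial pseudo-null submodule: any submodule annihilated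
by two relatively prime elements of `R` is zero. -/
theorem elementary_module_no_pseudoNull
    (R : Type*) [CommRing R] [IsDomain R] [UniqueFactorizationMonoid R]
    (l : ℕ) (q : Fin l → R) (hq0 : ∀ i, q i ≠ 0) (hqu : ∀ i, ¬ IsUnit (q i)) :
    ∀ N : Submodule R (⨁ i : Fin l, R ⧸ Ideal.span {q i}),
      (∃ a b : R, IsRelPrime a b ∧ (∀ x ∈ N, a • x = 0) ∧ (∀ x ∈ N, b • x = 0)) →
        N = ⊥ :=
  elementary_module_no_pseudoNull_general R l q
end

section
/- Let R be a Noetherian unique factorization domain and M a finitely generated R-module with no non-trivial pseudo-null submodule. Suppose q_1, …, q_l are pairwise non-associated prime elements of R and there exists an injective R-module homomorphism φ : ⊕_{i=1}^{l} R/(q_i) → M whose cokernel is pseudo-null. Then the set of associated prime ideals of M is exactly { (q_1), …, (q_l) }; that is, a prime ideal P of R has the form P = Ann_R(x) for some x ∈ M if and only if P = (q_i) for some i. -/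
open DirectSum

/-!
If `P = ann(x)` is prime, the pseudo-null hypotheses produce a multiple `r • x ≠ 0` in the image
of `φ`; since `r ∉ P`, it has the same annihilator `P`. In a direct sum the annihilator of `y` is
the finite intersection of the annihilators of its nonzero components, so a prime one is the
annihilator of a nonzero component of `y`, which in `R ⧸ (qᵢ)` is `(qᵢ)`.
-/

section

variable {R M N : Type*} [CommSemiring R] [AddCommMonoid M] [Module R M]
  [AddCommMonoid N] [Module R N]

def Submodule.IsPseudoNull_s10 (N : Submodule R M) : Prop :=
  ∃ a b : R, IsRelPrime a b ∧ (∀ x ∈ N, a • x = 0) ∧ (∀ x ∈ N, b • x = 0)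

theorem Submodule.isPseudoNull_span_singleton {x : M} {a b : R} (hab : IsRelPrime a b)
    (ha : a • x = 0) (hb : b • x = 0) : (R ∙ x).IsPseudoNull_s10 := by
  refine ⟨a, b, hab, ?_, ?_⟩ <;>
  · intro z hz
    obtain ⟨c, rfl⟩ := Submodule.mem_span_singleton.1 hz
    rw [smul_comm, ‹_ • x = 0›, smul_zero]

theorem exists_smul_ne_zero_mem_of_isRelPrime
    (hpn : ∀ N : Submodule R M, N.IsPseudoNull_s10 → N = ⊥) {N : Submodule R M} {x : M} {a b : R}
    (hab : IsRelPrime a b) (ha : a • x ∈ N) (hb : b • x ∈ N) (hx : x ≠ 0) :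
    ∃ r : R, r • x ≠ 0 ∧ r • x ∈ N := by
  by_contra! h
  have ha0 : a • x = 0 := by_contra fun ha0 ↦ h a ha0 ha
  have hb0 : b • x = 0 := by_contra fun hb0 ↦ h b hb0 hb
  exact hx (Submodule.span_singleton_eq_bot.1
    (hpn _ (Submodule.isPseudoNull_span_singleton hab ha0 hb0)))

theorem Submodule.annihilator_span_singleton_smul_of_isPrime {x : M} {r : R}
    (hP : (R ∙ x).annihilator.IsPrime) (hr : r • x ≠ 0) :
    (R ∙ r • x).annihilator = (R ∙ x).annihilator := by
  have hrP : r ∉ (R ∙ x).annihilator := by rwa [Submodule.mem_annihilator_span_singleton]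
  ext s
  refine ⟨fun h ↦ (hP.mem_or_mem ?_).resolve_right hrP, fun h ↦ ?_⟩
  · rwa [Submodule.mem_annihilator_span_singleton, ← smul_smul,
      ← Submodule.mem_annihilator_span_singleton]
  · rw [Submodule.mem_annihilator_span_singleton] at h ⊢
    rw [smul_comm, h, smul_zero]

theorem LinearMap.annihilator_span_singleton_map_of_injective {f : M →ₗ[R] N}
    (hf : Function.Injective f) (x : M) :
    (R ∙ f x).annihilator = (R ∙ x).annihilator := by
  ext r
  simp only [Submodule.mem_annihilator_span_singleton, ← map_smul, map_eq_zero_iff f hf]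

end

theorem DirectSum.annihilator_span_singleton_eq_inf {R ι : Type*} [CommSemiring R]
    [DecidableEq ι] {M : ι → Type*} [∀ i, AddCommMonoid (M i)] [∀ i, Module R (M i)]
    [∀ i (x : M i), Decidable (x ≠ 0)] (y : ⨁ i, M i) :
    (R ∙ y).annihilator = y.support.inf fun i ↦ (R ∙ y i).annihilator := by
  ext r
  simp only [Submodule.mem_annihilator_span_singleton, Submodule.mem_finsetInf,
    DFinsupp.mem_support_iff]
  rw [DFinsupp.ext_iff]
  refine forall_congr' fun i ↦ ?_
  rw [DirectSum.smul_apply, DirectSum.zero_apply]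
  by_cases hi : y i = 0 <;> simp [hi]

theorem DirectSum.exists_annihilator_span_singleton_component_eq {R ι : Type*} [CommSemiring R]
    {M : ι → Type*} [∀ i, AddCommMonoid (M i)] [∀ i, Module R (M i)] (y : ⨁ i, M i)
    (hP : (R ∙ y).annihilator.IsPrime) :
    ∃ i, (R ∙ y i).annihilator = (R ∙ y).annihilator := by
  classical
  rw [annihilator_span_singleton_eq_inf (R := R)] at hP ⊢
  obtain ⟨i, -, hi⟩ := Ideal.eq_inf_of_isPrime_inf hP
  exact ⟨i, hi⟩

theorem Ideal.Quotient.annihilator_span_singleton_of_ne_zero {R : Type*} [CommRing R]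
    {p : Ideal R} [p.IsPrime] {y : R ⧸ p} (hy : y ≠ 0) : (R ∙ y).annihilator = p := by
  obtain ⟨t, rfl⟩ := Ideal.Quotient.mk_surjective y
  ext r
  rw [Submodule.mem_annihilator_span_singleton, Algebra.smul_def, Ideal.Quotient.algebraMap_eq,
    ← map_mul, Ideal.Quotient.eq_zero_iff_mem]
  have ht : t ∉ p := by rwa [Ne, Ideal.Quotient.eq_zero_iff_mem] at hy
  exact ⟨fun h ↦ (‹p.IsPrime›.mem_or_mem h).resolve_right ht, fun h ↦ p.mul_mem_right t h⟩

theorem associated_primes_of_pseudo_iso_general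
    (R : Type*) [CommRing R]
    (M : Type*) [AddCommGroup M] [Module R M]
    (hpn : ∀ N : Submodule R M,
      (∃ a b : R, IsRelPrime a b ∧ (∀ x ∈ N, a • x = 0) ∧ (∀ x ∈ N, b • x = 0)) → N = ⊥)
    (l : ℕ) (q : Fin l → R) (hq : ∀ i, Prime (q i))
    (φ : (⨁ i : Fin l, R ⧸ Ideal.span {q i}) →ₗ[R] M)
    (hφ : Function.Injective φ)
    (hcoker : ∃ a b : R, IsRelPrime a b ∧
      ∀ y : M ⧸ LinearMap.range φ, a • y = 0 ∧ b • y = 0) :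
    ∀ P : Ideal R, P.IsPrime →
      ((∃ x : M, P = (Submodule.span R {x}).annihilator) ↔ ∃ i, P = Ideal.span {q i}) := by
  have hqP (i : Fin l) : (Ideal.span {q i}).IsPrime :=
    (Ideal.span_singleton_prime (hq i).ne_zero).2 (hq i)
  intro P hP
  constructor
  · rintro ⟨x, rfl⟩
    have hx : x ≠ 0 := by rintro rfl; exact hP.ne_top (by simp [Submodule.annihilator_bot])
    obtain ⟨a, b, hab, hk⟩ := hcoker
    have hmem (c : R) (hc : c • (Submodule.Quotient.mk x : M ⧸ LinearMap.range φ) = 0) :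
        c • x ∈ LinearMap.range φ :=
      (Submodule.Quotient.mk_eq_zero _).1 hc
    obtain ⟨r, hr, y, hy⟩ := exists_smul_ne_zero_mem_of_isRelPrime hpn hab
      (hmem a (hk _).1) (hmem b (hk _).2) hx
    have hxy : (R ∙ x).annihilator = (R ∙ y).annihilator := by
      rw [← Submodule.annihilator_span_singleton_smul_of_isPrime hP hr, ← hy,
        LinearMap.annihilator_span_singleton_map_of_injective hφ]
    rw [hxy] at hP ⊢
    obtain ⟨i, hi⟩ := DirectSum.exists_annihilator_span_singleton_component_eq y hP
    have hyi : y i ≠ 0 := by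
      rintro h
      exact hP.ne_top (by simp [← hi, h, Submodule.annihilator_bot])
    exact ⟨i, hi.symm.trans (Ideal.Quotient.annihilator_span_singleton_of_ne_zero hyi)⟩
  · rintro ⟨i, rfl⟩
    refine ⟨φ (lof R _ _ i 1), ?_⟩
    rw [LinearMap.annihilator_span_singleton_map_of_injective hφ,
      LinearMap.annihilator_span_singleton_map_of_injective (DirectSum.of_injective i),
      Ideal.Quotient.annihilator_span_singleton_of_ne_zero one_ne_zero]

/-- Let `R` be a Noetherian UFD and `M` a finitely generated `R`-module with
no non-trivial pseudo-null submodule. If `q₁, …, q_l` are pairwise non-associated prime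
elements of `R` and there is an injective `R`-homomorphism `⊕ᵢ R/(qᵢ) → M` with pseudo-null
cokernel, then the associated primes of `M` are exactly `(q₁), …, (q_l)`. -/
theorem associated_primes_of_pseudo_iso
    (R : Type*) [CommRing R] [IsDomain R] [IsNoetherianRing R] [UniqueFactorizationMonoid R]
    (M : Type*) [AddCommGroup M] [Module R M] [Module.Finite R M]
    (hpn : ∀ N : Submodule R M,
      (∃ a b : R, IsRelPrime a b ∧ (∀ x ∈ N, a • x = 0) ∧ (∀ x ∈ N, b • x = 0)) → N = ⊥)
    (l : ℕ) (q : Fin l → R) (hq : ∀ i, Prime (q i))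
    (hna : ∀ i j, i ≠ j → ¬ Associated (q i) (q j))
    (φ : (⨁ i : Fin l, R ⧸ Ideal.span {q i}) →ₗ[R] M)
    (hφ : Function.Injective φ)
    (hcoker : ∃ a b : R, IsRelPrime a b ∧
      ∀ y : M ⧸ LinearMap.range φ, a • y = 0 ∧ b • y = 0) :
    ∀ P : Ideal R, P.IsPrime →
      ((∃ x : M, P = (Submodule.span R {x}).annihilator) ↔ ∃ i, P = Ideal.span {q i}) :=
  associated_primes_of_pseudo_iso_general R M hpn l q hq φ hφ hcoker
end

section
/- Let p be a prime number and n ≥ 0 an integer. Let g(S), h(S) ∈ Z_p[[S]] be power series over the p-adic integers satisfying S·g(S) = ((1+S)^{p^n} − 1)·h(S), and suppose the constant term h(0) is divisible by p. If g is not identically zero modulo p (i.e., some coefficient of g is a p-adic unit), then the coefficient of S^i in g(S) is divisible by p for every i < p^n; in other words, the λ-invariant of g satisfies λ(g) ≥ p^n. -/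
/-! Modulo `p`, Frobenius turns `(1 + S) ^ p ^ n - 1` into `S ^ p ^ n`, so `S * ḡ = S ^ p ^ n * h̄`
with `S ∣ h̄`, whence `S ^ p ^ n ∣ ḡ`. -/

open PowerSeries

theorem PadicInt.natCast_dvd_iff_toZMod_eq_zero {p : ℕ} [Fact p.Prime] (x : ℤ_[p]) :
    (p : ℤ_[p]) ∣ x ↔ PadicInt.toZMod x = 0 := by
  rw [← RingHom.mem_ker, PadicInt.ker_toZMod, PadicInt.maximalIdeal_eq_span_p,
    Ideal.mem_span_singleton]

namespace PowerSeries

variable {R : Type*} [CommRing R]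

instance instCharP (p : ℕ) [CharP R p] : CharP R⟦X⟧ p :=
  charP_of_injective_ringHom C_injective p

theorem one_add_X_pow_char_pow_sub_one (p n : ℕ) [Fact p.Prime] [CharP R p] :
    ((1 + X : R⟦X⟧) ^ p ^ n - 1) = X ^ p ^ n := by
  rw [add_pow_char_pow, one_pow, add_sub_cancel_left]

theorem X_pow_dvd_of_X_mul_eq {m : ℕ} {g h : R⟦X⟧} (heq : X * g = X ^ m * h)
    (hh : constantCoeff h = 0) : X ^ m ∣ g := by
  obtain ⟨h', rfl⟩ := X_dvd_iff.mpr hh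
  exact ⟨h', X_mul_cancel (by rw [heq]; ring)⟩

end PowerSeries

theorem lambda_invariant_lower_bound_general (p : ℕ) [Fact p.Prime] (n : ℕ)
    (g h : PowerSeries ℤ_[p])
    (heq : PowerSeries.X * g = ((1 + PowerSeries.X) ^ (p ^ n) - 1) * h)
    (hh : (p : ℤ_[p]) ∣ PowerSeries.constantCoeff h) :
    ∀ i < p ^ n, (p : ℤ_[p]) ∣ PowerSeries.coeff i g := by
  have hmod : X * map PadicInt.toZMod g = X ^ p ^ n * map PadicInt.toZMod h := by
    simpa [one_add_X_pow_char_pow_sub_one] using congrArg (map PadicInt.toZMod) heq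
  have hX : X ^ p ^ n ∣ map PadicInt.toZMod g := by
    refine X_pow_dvd_of_X_mul_eq hmod ?_
    rwa [← coeff_zero_eq_constantCoeff_apply, coeff_map, coeff_zero_eq_constantCoeff_apply,
      ← PadicInt.natCast_dvd_iff_toZMod_eq_zero]
  intro i hi
  simpa [PadicInt.natCast_dvd_iff_toZMod_eq_zero] using X_pow_dvd_iff.mp hX i hi

/-- Let `g, h ∈ ℤ_p[[S]]` satisfy `S·g(S) = ((1+S)^{pⁿ} − 1)·h(S)` with
`p ∣ h(0)`. If some coefficient of `g` is a `p`-adic unit (i.e. `μ(g) = 0`), then every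
coefficient of `g` of index `< pⁿ` is divisible by `p`; that is, `λ(g) ≥ pⁿ`. -/
theorem lambda_invariant_lower_bound (p : ℕ) [Fact p.Prime] (n : ℕ)
    (g h : PowerSeries ℤ_[p])
    (heq : PowerSeries.X * g = ((1 + PowerSeries.X) ^ (p ^ n) - 1) * h)
    (hh : (p : ℤ_[p]) ∣ PowerSeries.constantCoeff h)
    (hg : ∃ i : ℕ, ¬ (p : ℤ_[p]) ∣ PowerSeries.coeff i g) :
    ∀ i < p ^ n, (p : ℤ_[p]) ∣ PowerSeries.coeff i g :=
  lambda_invariant_lower_bound_general p n g h heq hh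
end
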